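/- Let E₁ ⊆ V₁×W₁ and E₂ ⊆ V₂×W₂ be hypergraphs. There exists a local NS correlation over (V₂,W₁,V₁,W₂) fitting the game E₁↔E₂ if and only if there exist functions f : V₂ → V₁ and g : W₁ → W₂ such that for all v₂∈V₂ and w₁∈W₁, (f(v₂),w₁)∈E₁ if and only if (v₂,g(w₁))∈E₂; equivalently, f⁻¹(E₁(w₁)) = E₂(g(w₁)) for every w₁∈W₁, where E(w) = {v : (v,w)∈E}. -/

import Mathlib

/-!
A local correlation is a mixture of products of channels `Φ i ⊗ Ψ i`. Pick a term of positive
weight and, for each input, an output in the support of `Φ i` resp. `Ψ i`: this gives `f, g`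
with `Γ(f v₂, g w₁ | v₂, w₁) > 0`, so fitting the game forces `(f v₂, w₁) ∈ E₁ ↔ (v₂, g w₁) ∈ E₂`.
Conversely, a pair `f, g` with this property yields the deterministic product correlation
`δ_{f v₂} ⊗ δ_{g w₁}`, which is local, no-signalling and fits the game.
-/

/-- A channel from `V` to `W` : `E v w` stands for `𝓔(w|v)`. -/
def IsChannel {V W : Type*} [Fintype W] (E : V → W → ℝ) : Prop :=
  (∀ v w, 0 ≤ E v w) ∧ ∀ v, ∑ w, E v w = 1

/-- A no-signalling correlation over `(V₂, W₁, V₁, W₂)`: `Γ v₂ w₁ v₁ w₂` stands for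
`Γ(v₁, w₂ | v₂, w₁)`. -/
def IsNSCorr {V₂ W₁ V₁ W₂ : Type*} [Fintype V₁] [Fintype W₂]
    (Γ : V₂ → W₁ → V₁ → W₂ → ℝ) : Prop :=
  (∀ v₂ w₁ v₁ w₂, 0 ≤ Γ v₂ w₁ v₁ w₂) ∧
  (∀ v₂ w₁, ∑ v₁, ∑ w₂, Γ v₂ w₁ v₁ w₂ = 1) ∧
  (∀ v₂ w₁ w₁' v₁, ∑ w₂, Γ v₂ w₁ v₁ w₂ = ∑ w₂, Γ v₂ w₁' v₁ w₂) ∧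
  (∀ v₂ v₂' w₁ w₂, ∑ v₁, Γ v₂ w₁ v₁ w₂ = ∑ v₁, Γ v₂' w₁ v₁ w₂)

/-- A local correlation: a finite convex combination of products of channels. -/
def IsLocalCorr {V₂ W₁ V₁ W₂ : Type*} [Fintype V₁] [Fintype W₂]
    (Γ : V₂ → W₁ → V₁ → W₂ → ℝ) : Prop :=
  ∃ (n : ℕ) (lam : Fin n → ℝ) (Φ : Fin n → V₂ → V₁ → ℝ) (Ψ : Fin n → W₁ → W₂ → ℝ),
    (∀ i, 0 ≤ lam i) ∧ (∑ i, lam i = 1) ∧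
    (∀ i, IsChannel (Φ i)) ∧ (∀ i, IsChannel (Ψ i)) ∧
    ∀ v₂ w₁ v₁ w₂, Γ v₂ w₁ v₁ w₂ = ∑ i, lam i * (Φ i v₂ v₁ * Ψ i w₁ w₂)

/-- `Γ` fits the homomorphism game `E₁ ↔ E₂`. -/
def FitsHom {V₁ W₁ V₂ W₂ : Type*} (Γ : V₂ → W₁ → V₁ → W₂ → ℝ)
    (E₁ : Set (V₁ × W₁)) (E₂ : Set (V₂ × W₂)) : Prop :=
  ∀ v₂ w₁ v₁ w₂, 0 < Γ v₂ w₁ v₁ w₂ → ((v₁, w₁) ∈ E₁ ↔ (v₂, w₂) ∈ E₂)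

open Finset

section Channels

variable {V W : Type*}

def detChannel [DecidableEq W] (f : V → W) : V → W → ℝ :=
  fun v w => if w = f v then 1 else 0

theorem isChannel_detChannel [Fintype W] [DecidableEq W] (f : V → W) :
    IsChannel (detChannel f) :=
  ⟨fun v w => by unfold detChannel; positivity, fun v => by simp [detChannel]⟩

theorem IsChannel.exists_pos [Fintype W] {E : V → W → ℝ} (hE : IsChannel E) (v : V) :
    ∃ w, 0 < E v w := by
  obtain ⟨w, -, hw⟩ := exists_lt_of_sum_lt (s := univ) (f := fun _ => (0 : ℝ)) (g := E v)
    (by simp [hE.2 v])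
  exact ⟨w, hw⟩

end Channels

section ProductCorrelations

variable {V₂ W₁ V₁ W₂ : Type*}

def prodCorr (Φ : V₂ → V₁ → ℝ) (Ψ : W₁ → W₂ → ℝ) : V₂ → W₁ → V₁ → W₂ → ℝ :=
  fun v₂ w₁ v₁ w₂ => Φ v₂ v₁ * Ψ w₁ w₂

theorem fitsHom_prodCorr_detChannel_iff [DecidableEq V₁] [DecidableEq W₂]
    (E₁ : Set (V₁ × W₁)) (E₂ : Set (V₂ × W₂)) (f : V₂ → V₁) (g : W₁ → W₂) :
    FitsHom (prodCorr (detChannel f) (detChannel g)) E₁ E₂ ↔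
      ∀ v₂ w₁, (f v₂, w₁) ∈ E₁ ↔ (v₂, g w₁) ∈ E₂ := by
  have hpos : ∀ v₂ w₁ v₁ w₂, 0 < detChannel f v₂ v₁ * detChannel g w₁ w₂ ↔
      v₁ = f v₂ ∧ w₂ = g w₁ := fun v₂ w₁ v₁ w₂ => by
    unfold detChannel
    split_ifs <;> simp_all
  constructor
  · intro hfits v₂ w₁
    exact hfits v₂ w₁ (f v₂) (g w₁) ((hpos _ _ _ _).2 ⟨rfl, rfl⟩)
  · rintro hfg v₂ w₁ v₁ w₂ hvw
    obtain ⟨rfl, rfl⟩ := (hpos _ _ _ _).1 hvw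
    exact hfg v₂ w₁

variable [Fintype V₁] [Fintype W₂] {Φ : V₂ → V₁ → ℝ} {Ψ : W₁ → W₂ → ℝ}

theorem IsChannel.isNSCorr_prodCorr (hΦ : IsChannel Φ) (hΨ : IsChannel Ψ) :
    IsNSCorr (prodCorr Φ Ψ) := by
  refine ⟨fun v₂ w₁ v₁ w₂ => mul_nonneg (hΦ.1 v₂ v₁) (hΨ.1 w₁ w₂), fun v₂ w₁ => ?_,
    fun v₂ w₁ w₁' v₁ => ?_, fun v₂ v₂' w₁ w₂ => ?_⟩ <;>
  simp only [prodCorr, ← mul_sum, ← sum_mul, hΦ.2, hΨ.2, one_mul, mul_one]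

theorem IsChannel.isLocalCorr_prodCorr (hΦ : IsChannel Φ) (hΨ : IsChannel Ψ) :
    IsLocalCorr (prodCorr Φ Ψ) :=
  ⟨1, fun _ => 1, fun _ => Φ, fun _ => Ψ, fun _ => zero_le_one, by simp,
    fun _ => hΦ, fun _ => hΨ, fun v₂ w₁ v₁ w₂ => by simp [prodCorr]⟩

theorem IsLocalCorr.exists_forall_pos {Γ : V₂ → W₁ → V₁ → W₂ → ℝ} (hΓ : IsLocalCorr Γ) :
    ∃ (f : V₂ → V₁) (g : W₁ → W₂), ∀ v₂ w₁, 0 < Γ v₂ w₁ (f v₂) (g w₁) := by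
  obtain ⟨n, lam, Φ, Ψ, hlam_nonneg, hlam_sum, hΦ, hΨ, hΓ⟩ := hΓ
  obtain ⟨i, -, hi⟩ := exists_lt_of_sum_lt (s := univ) (f := fun _ => (0 : ℝ)) (g := lam)
    (by simp [hlam_sum])
  choose f hf using (hΦ i).exists_pos
  choose g hg using (hΨ i).exists_pos
  refine ⟨f, g, fun v₂ w₁ => ?_⟩
  have hterm_nonneg : ∀ j ∈ univ, 0 ≤ lam j * (Φ j v₂ (f v₂) * Ψ j w₁ (g w₁)) :=
    fun j _ => mul_nonneg (hlam_nonneg j) (mul_nonneg ((hΦ j).1 _ _) ((hΨ j).1 _ _))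
  rw [hΓ]
  exact (mul_pos hi (mul_pos (hf v₂) (hg w₁))).trans_le
    (single_le_sum hterm_nonneg (mem_univ i))

end ProductCorrelations

theorem localHom_iff_general {V₁ W₁ V₂ W₂ : Type*}
    [Fintype V₁] [Fintype W₂]
    (E₁ : Set (V₁ × W₁)) (E₂ : Set (V₂ × W₂)) :
    (∃ Γ : V₂ → W₁ → V₁ → W₂ → ℝ,
        IsNSCorr Γ ∧ IsLocalCorr Γ ∧ FitsHom Γ E₁ E₂) ↔
      (∃ (f : V₂ → V₁) (g : W₁ → W₂),
        ∀ v₂ w₁, (f v₂, w₁) ∈ E₁ ↔ (v₂, g w₁) ∈ E₂) := by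
  classical
  constructor
  · rintro ⟨Γ, -, hlocal, hfits⟩
    obtain ⟨f, g, hpos⟩ := hlocal.exists_forall_pos
    exact ⟨f, g, fun v₂ w₁ => hfits _ _ _ _ (hpos v₂ w₁)⟩
  · rintro ⟨f, g, hfg⟩
    have hf := isChannel_detChannel f
    have hg := isChannel_detChannel g
    exact ⟨prodCorr (detChannel f) (detChannel g), hf.isNSCorr_prodCorr hg,
      hf.isLocalCorr_prodCorr hg, (fitsHom_prodCorr_detChannel_iff E₁ E₂ f g).2 hfg⟩

/-- A local NS correlation fits the game `E₁ ↔ E₂` iff there is a classical hypergraph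
homomorphism: functions `f, g` with `(f v₂, w₁) ∈ E₁ ⟺ (v₂, g w₁) ∈ E₂`. -/
theorem localHom_iff {V₁ W₁ V₂ W₂ : Type*}
    [Fintype V₁] [Fintype W₁] [Fintype V₂] [Fintype W₂]
    (E₁ : Set (V₁ × W₁)) (E₂ : Set (V₂ × W₂)) :
    (∃ Γ : V₂ → W₁ → V₁ → W₂ → ℝ,
        IsNSCorr Γ ∧ IsLocalCorr Γ ∧ FitsHom Γ E₁ E₂) ↔
      (∃ (f : V₂ → V₁) (g : W₁ → W₂),
        ∀ v₂ w₁, (f v₂, w₁) ∈ E₁ ↔ (v₂, g w₁) ∈ E₂) :=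
  localHom_iff_general E₁ E₂
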